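/- For b > 0 and any integer k ≥ 2, the improper integral ∫_0^∞ (1/(e^{bx} − 1) − k/(e^{bkx} − 1)) dx converges and equals (ln k)/b. -/

import Mathlib

/-!
An antiderivative of `1 / (exp (c x) - 1)` is `log (1 - exp (-c x)) / c`, which tends to `0` at
infinity. Hence the integral over `(ε, ∞)` equals
`log ((1 - exp (-b k ε)) / (1 - exp (-b ε))) / b`, and by L'Hôpital's rule the ratio inside the
logarithm tends to `k` as `ε → 0`.
-/

open Real MeasureTheory Filter Set Topology

theorem hasDerivAt_log_one_sub_exp_neg_div {c x : ℝ} (hcx : c * x ≠ 0) :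
    HasDerivAt (fun y => log (1 - exp (-(c * y))) / c) (1 / (exp (c * x) - 1)) x := by
  have hc : c ≠ 0 := left_ne_zero_of_mul hcx
  have hexp : exp (c * x) - 1 ≠ 0 := sub_ne_zero.2 (by simpa using hcx)
  have hinner : HasDerivAt (fun y => 1 - exp (-(c * y))) (exp (-(c * x)) * c) x := by
    simpa using (((hasDerivAt_id x).const_mul c).neg.exp).const_sub 1
  have hne : 1 - exp (-(c * x)) ≠ 0 := sub_ne_zero.2 fun h => hcx (neg_eq_zero.1 (exp_eq_one_iff _ |>.1 h.symm))
  refine ((hinner.log hne).div_const c).congr_deriv ?_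
  rw [exp_neg] at hne ⊢
  field_simp

theorem tendsto_log_one_sub_exp_neg_div_atTop {c : ℝ} (hc : 0 < c) :
    Tendsto (fun y => log (1 - exp (-(c * y))) / c) atTop (𝓝 0) := by
  have hexp : Tendsto (fun y => exp (-(c * y))) atTop (𝓝 0) :=
    tendsto_exp_atBot.comp (tendsto_neg_atTop_atBot.comp (tendsto_id.const_mul_atTop hc))
  simpa using ((hexp.const_sub 1).log (by norm_num)).div_const c

section IntegralIoi

variable {c a : ℝ}

theorem integrableOn_Ioi_one_div_exp_sub_one (hc : 0 < c) (ha : 0 < a) :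
    IntegrableOn (fun x => 1 / (exp (c * x) - 1)) (Ioi a) := by
  refine integrableOn_Ioi_deriv_of_nonneg'
    (fun x hx => hasDerivAt_log_one_sub_exp_neg_div (mul_pos hc (ha.trans_le hx)).ne')
    (fun x hx => ?_) (tendsto_log_one_sub_exp_neg_div_atTop hc)
  have : 1 < exp (c * x) := one_lt_exp_iff.2 (mul_pos hc (ha.trans hx))
  exact one_div_nonneg.2 (sub_nonneg.2 this.le)

theorem integral_Ioi_one_div_exp_sub_one (hc : 0 < c) (ha : 0 < a) :
    ∫ x in Ioi a, 1 / (exp (c * x) - 1) = -(log (1 - exp (-(c * a))) / c) := by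
  rw [integral_Ioi_of_hasDerivAt_of_tendsto'
    (fun x hx => hasDerivAt_log_one_sub_exp_neg_div (mul_pos hc (ha.trans_le hx)).ne')
    (integrableOn_Ioi_one_div_exp_sub_one hc ha) (tendsto_log_one_sub_exp_neg_div_atTop hc)]
  ring

end IntegralIoi

section Difference

variable {b k ε : ℝ}

theorem integrableOn_Ioi_one_div_exp_sub_one_sub (hb : 0 < b) (hk : 0 < k) (hε : 0 < ε) :
    IntegrableOn (fun x => 1 / (exp (b * x) - 1) - k / (exp (b * k * x) - 1)) (Ioi ε) := by
  refine (integrableOn_Ioi_one_div_exp_sub_one hb hε).sub ?_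
  have h := (integrableOn_Ioi_one_div_exp_sub_one (mul_pos hb hk) hε).const_mul k
  simp only [mul_one_div] at h
  exact h

theorem integral_Ioi_one_div_exp_sub_one_sub (hb : 0 < b) (hk : 0 < k) (hε : 0 < ε) :
    ∫ x in Ioi ε, (1 / (exp (b * x) - 1) - k / (exp (b * k * x) - 1))
      = log ((1 - exp (-(b * k * ε))) / (1 - exp (-(b * ε)))) / b := by
  have hpos : ∀ {c}, 0 < c → 0 < 1 - exp (-(c * ε)) := fun hc =>
    sub_pos.2 (exp_lt_one_iff.2 (neg_neg_iff_pos.2 (mul_pos hc hε)))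
  simp_rw [← mul_one_div k]
  rw [integral_sub (integrableOn_Ioi_one_div_exp_sub_one hb hε)
      ((integrableOn_Ioi_one_div_exp_sub_one (mul_pos hb hk) hε).const_mul k),
    integral_const_mul, integral_Ioi_one_div_exp_sub_one hb hε,
    integral_Ioi_one_div_exp_sub_one (mul_pos hb hk) hε,
    log_div (hpos (mul_pos hb hk)).ne' (hpos hb).ne']
  field_simp
  ring

end Difference

theorem tendsto_one_sub_exp_neg_div_one_sub_exp_neg (c : ℝ) {b : ℝ} (hb : b ≠ 0) :
    Tendsto (fun t => (1 - exp (-(c * t))) / (1 - exp (-(b * t)))) (𝓝[≠] 0) (𝓝 (c / b)) := by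
  have hderiv : ∀ a t : ℝ, HasDerivAt (fun t => 1 - exp (-(a * t))) (exp (-(a * t)) * a) t :=
    fun a t => by simpa using (((hasDerivAt_id t).const_mul a).neg.exp).const_sub 1
  have hzero : ∀ a : ℝ, Tendsto (fun t => 1 - exp (-(a * t))) (𝓝[≠] 0) (𝓝 0) := fun a => by
    refine tendsto_nhdsWithin_of_tendsto_nhds ?_
    simpa using ((hderiv a 0).continuousAt.tendsto)
  refine HasDerivAt.lhopital_zero_nhdsNE (.of_forall (hderiv c)) (.of_forall (hderiv b))
    (.of_forall fun t => mul_ne_zero (exp_pos _).ne' hb) (hzero c) (hzero b) ?_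
  refine tendsto_nhdsWithin_of_tendsto_nhds ?_
  have : Continuous fun t : ℝ => exp (-(c * t)) * c / (exp (-(b * t)) * b) := by
    fun_prop (disch := exact fun t => mul_ne_zero (exp_pos _).ne' hb)
  simpa using this.tendsto 0

/-- For `b > 0` and integer `k ≥ 2`, the improper integral
`∫_0^∞ (1/(e^{bx} − 1) − k/(e^{bkx} − 1)) dx` converges (as the limit of integrals
over `(ε, ∞)` as `ε → 0⁺`) and equals `(ln k)/b`. -/
theorem stmt8 (b : ℝ) (hb : 0 < b) (k : ℕ) (hk : 2 ≤ k) :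
    (∀ ε : ℝ, 0 < ε →
      IntegrableOn (fun x : ℝ => 1/(Real.exp (b*x) - 1) - (k:ℝ)/(Real.exp (b*(k:ℝ)*x) - 1))
        (Set.Ioi ε)) ∧
    Tendsto (fun ε : ℝ =>
        ∫ x in Set.Ioi ε, (1/(Real.exp (b*x) - 1) - (k:ℝ)/(Real.exp (b*(k:ℝ)*x) - 1)))
      (nhdsWithin 0 (Set.Ioi 0)) (nhds (Real.log k / b)) := by
  have hk₀ : (0 : ℝ) < k := Nat.cast_pos.2 (by omega)
  refine ⟨fun ε hε => integrableOn_Ioi_one_div_exp_sub_one_sub hb hk₀ hε, ?_⟩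
  have hratio := tendsto_one_sub_exp_neg_div_one_sub_exp_neg (b * k) hb.ne'
  rw [mul_div_cancel_left₀ _ hb.ne'] at hratio
  refine (((hratio.mono_left (nhdsGT_le_nhdsNE 0)).log hk₀.ne').div_const b).congr' ?_
  filter_upwards [self_mem_nhdsWithin] with ε hε
  exact (integral_Ioi_one_div_exp_sub_one_sub hb hk₀ hε).symm
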